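/- arXiv:math/0207083 — 2 statements merged into one kernel-verified Lean document; each statement's English description precedes it below -/
import Mathlib

section
/- Let A = K{x} be the free magma algebra in one variable over a field K of characteristic 0, D the derivation with D(x)=1, and A_0 = ker D. For n ≥ 2, the dimension of the degree-n homogeneous component (A_0)_n equals c_n − c_{n−1}, where c_n = (2(n−1))! / (n!(n−1)!) is the n-th Catalan-type number (c_1 = 1, c_2 = 1, c_3 = 2, c_4 = 5, ...). -/
noncomputable section

/-- The free unital magma algebra `K{x}` in one variable. -/
abbrev FreeMagmaAlgebra1 (K : Type*) [Field K] : Type _ :=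
  MonoidAlgebra K (WithOne (FreeMagma Unit))

/-- The generator `x` of `K{x}`. -/
def genx (K : Type*) [Field K] : FreeMagmaAlgebra1 K :=
  MonoidAlgebra.of K (WithOne (FreeMagma Unit)) (FreeMagma.of ())

/-- Degree of a monomial: the unit has degree 0, a magma monomial has its length. -/
def degW : WithOne (FreeMagma Unit) → ℕ :=
  WithOne.recOneCoe 0 fun t => t.length

/-- The homogeneous component of degree `n` of `K{x}`, as a submodule. -/
def homogComponent (K : Type*) [Field K] (n : ℕ) : Submodule K (FreeMagmaAlgebra1 K) :=
  MonoidAlgebra.supported K K {m : WithOne (FreeMagma Unit) | degW m = n}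

/-- The Catalan-type numbers `c_n = (2(n−1))!/(n!(n−1)!)`. -/
def catalanC (n : ℕ) : ℕ := (2 * (n - 1)).factorial / (n.factorial * (n - 1).factorial)

/-!
`D` lowers the degree by one and kills the constants, so it is locally nilpotent. With `R` the
right multiplication by `x`, the Leibniz rule and `D x = 1` give `D R = R D + 1`; in
characteristic 0 this makes `D : A_n → A_{n-1}` surjective: if `D^(k+1) f = 0`, then `D^k` kills
`f - D (R f) / (k + 1)`, and one inducts on `k`. Rank–nullity then gives
`dim (A_0)_n = dim A_n - dim A_{n-1}`, and the monomials of degree `n` are the planar binary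
trees with `n` leaves, of which there are `catalan (n - 1) = c_n`.
-/

theorem pow_succ_mul_eq_of_mul_eq_mul_add_one {A : Type*} [Ring A] {d r : A}
    (h : d * r = r * d + 1) (k : ℕ) :
    d ^ (k + 1) * r = r * d ^ (k + 1) + (k + 1 : ℕ) * d ^ k := by
  induction k with
  | zero => simp [h]
  | succ k ih =>
    rw [pow_succ', mul_assoc, ih, mul_add, ← mul_assoc, h, ← mul_assoc,
      ← (Nat.cast_commute _ d).eq]
    push_cast
    simp only [add_mul, mul_assoc, one_mul, ← pow_succ']
    abel

theorem Submodule.le_map_of_mul_eq_mul_add_one {K V : Type*} [Field K] [CharZero K]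
    [AddCommGroup V] [Module K V] {d r : Module.End K V} (h : d * r = r * d + 1)
    {p q : Submodule K V} (hr : p.map r ≤ q) (hd : q.map d ≤ p)
    (hnil : ∀ f ∈ p, ∃ k, (d ^ k) f = 0) : p ≤ q.map d := by
  intro f hf
  obtain ⟨k, hk⟩ := hnil f hf
  induction k generalizing f with
  | zero => simp_all
  | succ k ih =>
    have hrf : r f ∈ q := hr (mem_map_of_mem hf)
    -- `f - d (r f) / (k + 1)` is killed by `d ^ k`, because `[d ^ (k + 1), r] = (k + 1) d ^ k`
    set c : K := ((k + 1 : ℕ) : K)⁻¹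
    have hc : c * (k + 1 : ℕ) = 1 := inv_mul_cancel₀ (Nat.cast_ne_zero.2 k.succ_ne_zero)
    have hkill : (d ^ k) (f - c • d (r f)) = 0 := by
      have hcomm := congr($(pow_succ_mul_eq_of_mul_eq_mul_add_one h k) f)
      simp only [Module.End.mul_apply, LinearMap.add_apply, hk, map_zero, zero_add,
        Module.End.natCast_apply] at hcomm
      rw [map_sub, map_smul, ← Module.End.mul_apply, ← pow_succ, hcomm,
        ← Nat.cast_smul_eq_nsmul K, smul_smul, hc, one_smul, sub_self]
    obtain ⟨g, hg, hdg⟩ := ih (sub_mem hf (smul_mem _ _ (hd (mem_map_of_mem hrf)))) hkill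
    exact ⟨g + c • r f, add_mem hg (smul_mem _ _ hrf), by simp [hdg]⟩

theorem Submodule.finrank_map_add_finrank_ker_inf {K V W : Type*} [Field K] [AddCommGroup V]
    [Module K V] [AddCommGroup W] [Module K W] (f : V →ₗ[K] W) (p : Submodule K V)
    [FiniteDimensional K p] :
    Module.finrank K (p.map f) + Module.finrank K ↥(LinearMap.ker f ⊓ p) =
      Module.finrank K p := by
  have h := (f.domRestrict p).finrank_range_add_finrank_ker
  rwa [LinearMap.range_domRestrict, LinearMap.ker_domRestrict,
    (equivMapOfInjective _ p.subtype_injective (comap p.subtype (LinearMap.ker f))).finrank_eq,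
    map_comap_subtype, inf_comm] at h

theorem MonoidAlgebra.finrank_supported {K M : Type*} [Field K] (s : Set M) :
    Module.finrank K (supported K K s) = Nat.card s :=
  (supportedEquivFinsupp s).finrank_eq.trans
    (Module.finrank_eq_nat_card_basis Finsupp.basisSingleOne)

theorem catalanC_succ (m : ℕ) : catalanC (m + 1) = catalan m := by
  rw [catalanC, Nat.add_sub_cancel, catalan_eq_centralBinom_div, Nat.centralBinom,
    Nat.choose_eq_factorial_div_factorial (by omega), Nat.div_div_eq_div_mul, Nat.factorial_succ,
    show 2 * m - m = m by omega]
  ring_nf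

theorem catalan_ne_zero (m : ℕ) : catalan m ≠ 0 := fun h =>
  Nat.centralBinom_ne_zero m (by rw [← succ_mul_catalan_eq_centralBinom, h, mul_zero])

namespace FreeMagma

def toBinaryTree : FreeMagma Unit → BinaryTree Unit
  | of _ => .nil
  | mul a b => .node () a.toBinaryTree b.toBinaryTree

def ofBinaryTree : BinaryTree Unit → FreeMagma Unit
  | .nil => of ()
  | .node _ a b => mul (ofBinaryTree a) (ofBinaryTree b)

def equivBinaryTree : FreeMagma Unit ≃ BinaryTree Unit where
  toFun := toBinaryTree
  invFun := ofBinaryTree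
  left_inv t := by
    induction t with
    | ih1 => rfl
    | ih2 a b ha hb => exact congr($ha * $hb)
  right_inv t := by
    induction t with
    | nil => rfl
    | node _ a b ha hb => exact congr(BinaryTree.node () $ha $hb)

theorem numLeaves_equivBinaryTree (t : FreeMagma Unit) :
    (equivBinaryTree t).numLeaves = t.length := by
  induction t with
  | ih1 => rfl
  | ih2 a b ha hb => exact congr($ha + $hb)

theorem card_length_eq_succ (m : ℕ) :
    Nat.card {t : FreeMagma Unit // t.length = m + 1} = catalan m := by
  rw [← BinaryTree.treesOfNumNodesEq_card_eq_catalan, ← Nat.card_eq_finsetCard]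
  refine Nat.card_congr (equivBinaryTree.subtypeEquiv fun t => ?_)
  rw [BinaryTree.mem_treesOfNumNodesEq, ← numLeaves_equivBinaryTree,
    BinaryTree.numLeaves_eq_numNodes_succ, Nat.add_right_cancel_iff]

end FreeMagma

@[simp]
theorem degW_one : degW 1 = 0 := rfl

@[simp]
theorem degW_coe (t : FreeMagma Unit) : degW t = t.length := rfl

theorem degW_mul (a b : WithOne (FreeMagma Unit)) : degW (a * b) = degW a + degW b := by
  induction a using WithOne.recOneCoe <;> induction b using WithOne.recOneCoe <;>
    simp [← WithOne.coe_mul]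

theorem degW_eq_zero_iff {w : WithOne (FreeMagma Unit)} : degW w = 0 ↔ w = 1 := by
  induction w using WithOne.recOneCoe <;> simp [(FreeMagma.length_pos _).ne']

theorem card_degW_eq_succ (m : ℕ) :
    Nat.card {w : WithOne (FreeMagma Unit) | degW w = m + 1} = catalan m := by
  have himage : {w : WithOne (FreeMagma Unit) | degW w = m + 1} =
      (↑) '' {t : FreeMagma Unit | t.length = m + 1} := by
    ext w
    induction w using WithOne.recOneCoe <;> simp
  rw [himage, Nat.card_image_of_injective WithOne.coe_injective]
  exact FreeMagma.card_length_eq_succ m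

section Grading

variable {K : Type*} [Field K]

theorem finrank_homogComponent_succ (m : ℕ) :
    Module.finrank K (homogComponent K (m + 1)) = catalan m :=
  (MonoidAlgebra.finrank_supported _).trans (card_degW_eq_succ m)

instance (m : ℕ) : FiniteDimensional K (homogComponent K (m + 1)) :=
  Module.finite_of_finrank_pos <| by
    rw [finrank_homogComponent_succ]
    exact Nat.pos_of_ne_zero (catalan_ne_zero m)

theorem single_mem_homogComponent (w : WithOne (FreeMagma Unit)) (c : K) :
    MonoidAlgebra.single w c ∈ homogComponent K (degW w) := by
  rw [homogComponent, MonoidAlgebra.mem_supported, MonoidAlgebra.coeff_single]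
  exact (Finset.coe_subset.2 Finsupp.support_single_subset).trans (by simp)

theorem genx_mem_homogComponent_one : genx K ∈ homogComponent K 1 :=
  single_mem_homogComponent _ _

theorem homogComponent_zero : homogComponent K 0 = K ∙ 1 := by
  rw [homogComponent, MonoidAlgebra.supported_eq_span_single]
  simp [degW_eq_zero_iff, MonoidAlgebra.one_def]

theorem mul_mem_homogComponent {f g : FreeMagmaAlgebra1 K} {a b : ℕ}
    (hf : f ∈ homogComponent K a) (hg : g ∈ homogComponent K b) :
    f * g ∈ homogComponent K (a + b) := by
  classical
  intro w hw
  obtain ⟨u, hu, v, hv, rfl⟩ := Finset.mem_mul.1 (MonoidAlgebra.support_coeff_mul_subset f g hw)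
  show degW (u * v) = a + b
  rw [degW_mul, show degW u = a from hf hu, show degW v = b from hg hv]

end Grading

section Leibniz

variable {K : Type*} [Field K] {D : FreeMagmaAlgebra1 K →ₗ[K] FreeMagmaAlgebra1 K}
  (hD : ∀ f g : FreeMagmaAlgebra1 K, D (f * g) = D f * g + f * D g)
include hD

theorem homogComponent_zero_le_ker : homogComponent K 0 ≤ LinearMap.ker D := by
  rw [homogComponent_zero, Submodule.span_singleton_le_iff_mem, LinearMap.mem_ker]
  simpa using hD 1 1

variable (hDx : D (genx K) = 1)
include hDx

theorem apply_single_mem_homogComponent (t : FreeMagma Unit) {m : ℕ} (ht : t.length = m + 1) :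
    D (MonoidAlgebra.single (t : WithOne (FreeMagma Unit)) 1) ∈ homogComponent K m := by
  induction t generalizing m with
  | ih1 =>
    obtain rfl : m = 0 := by simpa [FreeMagma.length] using ht
    rw [homogComponent_zero, show MonoidAlgebra.single _ 1 = genx K from rfl, hDx]
    exact Submodule.mem_span_singleton_self 1
  | ih2 a b ha hb =>
    obtain ⟨i, hi⟩ := Nat.exists_eq_add_one.2 (FreeMagma.length_pos a)
    obtain ⟨j, hj⟩ := Nat.exists_eq_add_one.2 (FreeMagma.length_pos b)
    have hm : m = i + j + 1 := by simp [FreeMagma.length, hi, hj] at ht; omega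
    rw [WithOne.coe_mul, ← one_mul (1 : K), ← MonoidAlgebra.single_mul_single, hD]
    refine add_mem ?_ ?_
    · rw [hm, add_assoc, ← hj]
      exact mul_mem_homogComponent (ha hi)
        (single_mem_homogComponent (b : WithOne (FreeMagma Unit)) 1)
    · rw [hm, add_right_comm, ← hi]
      exact mul_mem_homogComponent
        (single_mem_homogComponent (a : WithOne (FreeMagma Unit)) 1) (hb hj)

theorem map_homogComponent_succ_le (m : ℕ) :
    (homogComponent K (m + 1)).map D ≤ homogComponent K m := by
  rw [Submodule.map_le_iff_le_comap, homogComponent, MonoidAlgebra.supported_eq_span_single,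
    Submodule.span_le]
  rintro _ ⟨w, hw, rfl⟩
  induction w using WithOne.recOneCoe with
  | one => simp at hw
  | coe t => exact apply_single_mem_homogComponent hD hDx t hw

theorem pow_succ_apply_eq_zero_of_mem {m : ℕ} {f : FreeMagmaAlgebra1 K}
    (hf : f ∈ homogComponent K m) : (D ^ (m + 1)) f = 0 := by
  induction m generalizing f with
  | zero => simpa using homogComponent_zero_le_ker hD hf
  | succ m ih =>
    rw [pow_succ, Module.End.mul_apply]
    exact ih (map_homogComponent_succ_le hD hDx m (Submodule.mem_map_of_mem hf))

theorem mul_mulRight_genx :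
    D * LinearMap.mulRight K (genx K) = LinearMap.mulRight K (genx K) * D + 1 :=
  LinearMap.ext fun f => by simp [hD, hDx]

theorem map_homogComponent_succ [CharZero K] (m : ℕ) :
    (homogComponent K (m + 1)).map D = homogComponent K m := by
  refine le_antisymm (map_homogComponent_succ_le hD hDx m) ?_
  refine Submodule.le_map_of_mul_eq_mul_add_one (mul_mulRight_genx hD hDx) ?_
    (map_homogComponent_succ_le hD hDx m)
    fun f hf => ⟨m + 1, pow_succ_apply_eq_zero_of_mem hD hDx hf⟩
  rw [Submodule.map_le_iff_le_comap]
  exact fun f hf => mul_mem_homogComponent hf genx_mem_homogComponent_one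

end Leibniz

/-- For `n ≥ 2`, the degree-`n` homogeneous component of the algebra of
constants `A_0 = ker D` has dimension `c_n − c_{n−1}`. -/
theorem dim_constants (K : Type*) [Field K] [CharZero K]
    (D : FreeMagmaAlgebra1 K →ₗ[K] FreeMagmaAlgebra1 K)
    (hD : ∀ f g : FreeMagmaAlgebra1 K, D (f * g) = D f * g + f * D g)
    (hDx : D (genx K) = 1)
    (n : ℕ) (hn : 2 ≤ n) :
    Module.finrank K ↥(LinearMap.ker D ⊓ homogComponent K n) = catalanC n - catalanC (n - 1) := by
  obtain ⟨m, rfl⟩ : ∃ m, n = m + 2 := ⟨n - 2, by omega⟩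
  have rank_nullity := (homogComponent K (m + 2)).finrank_map_add_finrank_ker_inf D
  rw [map_homogComponent_succ hD hDx, finrank_homogComponent_succ,
    finrank_homogComponent_succ] at rank_nullity
  rw [show m + 2 - 1 = m + 1 from rfl, catalanC_succ, catalanC_succ]
  omega
end
end

section
/- Let M = M(x) be the free magma on one generator, Γ = M \ (xM ∪ {x}), and Ω = Γ \ (Γ·Γ) the free generating set of Γ. Let Ω_n be the degree-n part of Ω. Then Ω_1 = Ω_2 = ∅, Ω_3 = {x²·x}, and for n ≥ 4, |Ω_n| = 3(c_{n−1} − c_{n−2}), where c_m = (2(m−1))!/(m!(m−1)!). -/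
/-! Write `Mₙ` for the elements of length `n` (so `|Mₙ| = cₙ`, via planar binary trees) and `xM` for
the products with left factor `x`. Then `M \ {x} = xM ⊔ Γ`, hence `Γ = (M \ {x})·M = xM·M ⊔ Γ·M` and
`Ω = Γ \ Γ·Γ = xM·M ⊔ Γ·x ⊔ Γ·xM`. Grafting one more leaf `x` (`u·v ↦ (x·u)·v`, `u ↦ u·x`,
`u·v ↦ u·(x·v)`) matches the degree-`n` parts of these three pieces with the degree-`(n-1)` parts of
`M·M`, `Γ` and `Γ·M`, so `|Ωₙ| = c_{n-1} + γ_{n-1} + (γ_{n-1} - c_{n-2})` where `γₖ = cₖ - c_{k-1}`. -/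

noncomputable section

namespace Stmt9

/-- The single generator `x` of the free magma `M(x)`. -/
def x1 : FreeMagma Unit := FreeMagma.of ()

/-- `Γ = M \ (xM ∪ {x})`. -/
def Gam : Set (FreeMagma Unit) := {t | t ≠ x1 ∧ ∀ s, t ≠ x1 * s}

/-- `Ω = Γ \ Γ·Γ`, the free generating set of `Γ`. -/
def Om : Set (FreeMagma Unit) :=
  Gam \ {t | ∃ s ∈ Gam, ∃ u ∈ Gam, t = s * u}

/-- The degree-`n` part of `Ω`. -/
def OmDeg (n : ℕ) : Set (FreeMagma Unit) := {t | t ∈ Om ∧ t.length = n}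

/-- The Catalan-type numbers `c_m = (2(m−1))!/(m!(m−1)!)`. -/
def catalanC (m : ℕ) : ℕ := (2 * (m - 1)).factorial / (m.factorial * (m - 1).factorial)

end Stmt9

open Set Function
open scoped Pointwise

namespace FreeMagma

variable {α : Type*}

theorem of_ne_mul (a : α) (u v : FreeMagma α) : of a ≠ u * v := nofun

theorem mul_eq_mul_iff {a b c d : FreeMagma α} : a * b = c * d ↔ a = c ∧ b = d :=
  ⟨fun h => by injection h with hac hbd; exact ⟨hac, hbd⟩, fun ⟨hac, hbd⟩ => hac ▸ hbd ▸ rfl⟩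

instance : IsCancelMul (FreeMagma α) where
  mul_left_cancel _ _ _ h := (mul_eq_mul_iff.mp h).2
  mul_right_cancel _ _ _ h := (mul_eq_mul_iff.mp h).1

@[simp] theorem length_of (a : α) : (of a).length = 1 := rfl

@[simp] theorem length_mul (u v : FreeMagma α) : (u * v).length = u.length + v.length := rfl

theorem disjoint_mul_of_disjoint_left {S S' : Set (FreeMagma α)} (h : Disjoint S S')
    (T T' : Set (FreeMagma α)) : Disjoint (S * T) (S' * T') := by
  rw [Set.disjoint_left]
  rintro _ ⟨u, hu, v, -, rfl⟩ ⟨u', hu', v', -, huv⟩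
  exact Set.disjoint_left.mp h hu ((mul_eq_mul_iff.mp huv).1 ▸ hu')

theorem disjoint_mul_of_disjoint_right {T T' : Set (FreeMagma α)} (h : Disjoint T T')
    (S S' : Set (FreeMagma α)) : Disjoint (S * T) (S' * T') := by
  rw [Set.disjoint_left]
  rintro _ ⟨u, -, v, hv, rfl⟩ ⟨u', -, v', hv', huv⟩
  exact Set.disjoint_left.mp h hv ((mul_eq_mul_iff.mp huv).2 ▸ hv')

def mapFactors (φ ψ : FreeMagma α → FreeMagma α) : FreeMagma α → FreeMagma α
  | of a => of a
  | mul u v => φ u * ψ v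

@[simp] theorem mapFactors_mul (φ ψ : FreeMagma α → FreeMagma α) (u v : FreeMagma α) :
    mapFactors φ ψ (u * v) = φ u * ψ v := rfl

theorem mapFactors_injective {φ ψ : FreeMagma α → FreeMagma α} (hφ : Injective φ)
    (hψ : Injective ψ) : Injective (mapFactors φ ψ) := by
  rintro (a | ⟨u, v⟩) (b | ⟨u', v'⟩) h
  · exact h
  · exact absurd h (of_ne_mul _ _ _)
  · exact absurd h.symm (of_ne_mul _ _ _)
  · obtain ⟨hu, hv⟩ := mul_eq_mul_iff.mp h
    exact congrArg₂ mul (hφ hu) (hψ hv)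

theorem image_mapFactors_mul (φ ψ : FreeMagma α → FreeMagma α) (S T : Set (FreeMagma α)) :
    mapFactors φ ψ '' (S * T) = φ '' S * ψ '' T := by
  rw [← image2_mul, ← image2_mul, image_image2, image2_image_left, image2_image_right]
  rfl

end FreeMagma

namespace Stmt9

open FreeMagma

theorem length_eq_one_iff {t : FreeMagma Unit} : t.length = 1 ↔ t = x1 := by
  refine ⟨fun h => ?_, fun h => h ▸ rfl⟩
  cases t with
  | of a => rfl
  | mul u v =>
    have := u.length_pos
    have := v.length_pos
    simp only [length] at h
    omega

theorem univ_mul_univ : (univ * univ : Set (FreeMagma Unit)) = {x1}ᶜ := by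
  ext (_ | ⟨u, v⟩)
  · simp [mem_mul, x1, eq_comm, of_ne_mul]
  · simp [mem_mul, x1]

def ofLength (n : ℕ) : Set (FreeMagma Unit) := {t | t.length = n}

def toTree : FreeMagma Unit → BinaryTree Unit
  | .of _ => .nil
  | .mul u v => .node () (toTree u) (toTree v)

def ofTree : BinaryTree Unit → FreeMagma Unit
  | .nil => x1
  | .node _ a b => ofTree a * ofTree b

def treeEquiv : FreeMagma Unit ≃ BinaryTree Unit where
  toFun := toTree
  invFun := ofTree
  left_inv t := by
    induction t with
    | ih1 => rfl
    | ih2 u v ihu ihv => exact congrArg₂ (· * ·) ihu ihv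
  right_inv a := by
    induction a with
    | nil => rfl
    | node _ a b iha ihb => exact congrArg₂ (BinaryTree.node ()) iha ihb

theorem numNodes_treeEquiv (t : FreeMagma Unit) : (treeEquiv t).numNodes + 1 = t.length := by
  induction t with
  | ih1 => rfl
  | ih2 u v ihu ihv =>
    simp only [treeEquiv, Equiv.coe_fn_mk] at ihu ihv ⊢
    simp only [toTree, BinaryTree.numNodes, length]
    omega

theorem ofLength_succ (n : ℕ) :
    ofLength (n + 1) = treeEquiv ⁻¹' (BinaryTree.treesOfNumNodesEq n : Set (BinaryTree Unit)) := by
  ext t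
  simp only [ofLength, mem_ofPred_eq, mem_preimage, Finset.mem_coe,
    BinaryTree.mem_treesOfNumNodesEq, ← numNodes_treeEquiv t]
  omega

theorem ncard_ofLength_succ (n : ℕ) : (ofLength (n + 1)).ncard = catalan n := by
  rw [ofLength_succ, ncard_preimage_of_injective_subset_range treeEquiv.injective
    (by simp), ncard_coe_finset, BinaryTree.treesOfNumNodesEq_card_eq_catalan]

theorem finite_ofLength (n : ℕ) : (ofLength n).Finite := by
  cases n with
  | zero => exact finite_empty.subset fun t ht => (t.length_pos.ne' ht).elim
  | succ n =>
    rw [ofLength_succ]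
    exact (Finset.finite_toSet _).preimage treeEquiv.injective.injOn

theorem ncard_union_inter_ofLength {S T : Set (FreeMagma Unit)} (h : Disjoint S T) (n : ℕ) :
    ((S ∪ T) ∩ ofLength n).ncard = (S ∩ ofLength n).ncard + (T ∩ ofLength n).ncard := by
  rw [union_inter_distrib_right, ncard_union_eq
    (h.mono inter_subset_left inter_subset_left)
    ((finite_ofLength n).subset inter_subset_right) ((finite_ofLength n).subset inter_subset_right)]

theorem ncard_image_inter_ofLength {f : FreeMagma Unit → FreeMagma Unit} (hf : Injective f)
    {S : Set (FreeMagma Unit)} {d : ℕ} (hlen : ∀ t ∈ S, (f t).length = t.length + d) (n : ℕ) :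
    (f '' S ∩ ofLength (n + d)).ncard = (S ∩ ofLength n).ncard := by
  suffices f '' S ∩ ofLength (n + d) = f '' (S ∩ ofLength n) by
    rw [this, ncard_image_of_injective _ hf]
  ext y
  constructor
  · rintro ⟨⟨t, ht, rfl⟩, hy⟩
    refine ⟨t, ⟨ht, ?_⟩, rfl⟩
    simp only [ofLength, mem_ofPred_eq, hlen t ht] at hy ⊢
    omega
  · rintro ⟨t, ⟨ht, htn⟩, rfl⟩
    exact ⟨mem_image_of_mem f ht, (hlen t ht).trans (congrArg (· + d) htn)⟩

def xM : Set (FreeMagma Unit) := {x1} * univ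

@[simp] theorem mem_xM {t : FreeMagma Unit} : t ∈ xM ↔ ∃ s, x1 * s = t := by
  simp [xM, singleton_mul]

theorem Gam_eq : Gam = {x1}ᶜ * univ := by
  ext t
  constructor
  · rintro ⟨hx, hxM⟩
    cases t with
    | of => exact absurd rfl hx
    | mul u v => exact ⟨u, fun hu => hxM v (by rw [hu]; rfl), v, trivial, rfl⟩
  · rintro ⟨u, hu, v, -, rfl⟩
    exact ⟨(of_ne_mul _ _ _).symm, fun s h => hu (mul_eq_mul_iff.mp h).1⟩

theorem disjoint_xM_Gam : Disjoint xM Gam :=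
  Set.disjoint_left.mpr fun _ ht ⟨_, h⟩ =>
    let ⟨s, hs⟩ := mem_xM.mp ht
    h s hs.symm

theorem disjoint_x1_xM : Disjoint {x1} xM := by
  simp [x1]

theorem compl_x1_eq_xM_union_Gam : {x1}ᶜ = xM ∪ Gam := by
  ext t
  by_cases ht : t ∈ xM
  · obtain ⟨s, rfl⟩ := mem_xM.mp ht
    simp [x1]
  · simp only [mem_compl_iff, mem_singleton_iff, mem_union, ht, false_or, Gam, mem_ofPred_eq]
    simp only [mem_xM, not_exists] at ht
    exact ⟨fun hx => ⟨hx, fun s h => ht s h.symm⟩, And.left⟩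

theorem Gam_eq_union : Gam = xM * univ ∪ Gam * univ := by
  conv_lhs => rw [Gam_eq, compl_x1_eq_xM_union_Gam]
  exact union_mul

theorem Om_eq_diff : Om = Gam \ (Gam * Gam) := by
  refine congrArg (Gam \ ·) (Set.ext fun t => ?_)
  simp only [mem_mul, eq_comm, mem_ofPred_eq]

theorem Om_eq : Om = xM * univ ∪ (Gam * {x1} ∪ Gam * xM) := by
  have huniv : (univ : Set (FreeMagma Unit)) = ({x1} ∪ xM) ∪ Gam := by
    rw [union_assoc, ← compl_x1_eq_xM_union_Gam, union_compl_self]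
  have hx1xM : Disjoint ({x1} ∪ xM) Gam :=
    disjoint_union_left.mpr ⟨disjoint_singleton_left.mpr fun h => h.1 rfl, disjoint_xM_Gam⟩
  have hGam : (Gam * univ) \ (Gam * Gam) = Gam * {x1} ∪ Gam * xM := by
    rw [huniv, mul_union, union_sdiff_right,
      (disjoint_mul_of_disjoint_right hx1xM _ _).sdiff_eq_left, mul_union]
  rw [Om_eq_diff]
  nth_rw 1 [Gam_eq_union]
  rw [union_sdiff_distrib, (disjoint_mul_of_disjoint_left disjoint_xM_Gam _ _).sdiff_eq_left,
    hGam]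

theorem three_le_length_of_mem_Gam {t : FreeMagma Unit} (ht : t ∈ Gam) : 3 ≤ t.length := by
  rw [Gam_eq] at ht
  obtain ⟨u, hu, v, -, rfl⟩ := ht
  have := u.length_pos
  have := v.length_pos
  have := mt length_eq_one_iff.mp hu
  simp only [length_mul]
  omega

theorem ncard_xM_inter_ofLength (n : ℕ) :
    (xM ∩ ofLength (n + 1)).ncard = (ofLength n).ncard := by
  rw [xM, singleton_mul, ncard_image_inter_ofLength (mul_right_injective x1) (fun t _ => ?_) n,
    univ_inter]
  simp [x1, add_comm]

theorem compl_x1_inter_ofLength {n : ℕ} (hn : n ≠ 1) : {x1}ᶜ ∩ ofLength n = ofLength n :=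
  inter_eq_right.mpr fun _ ht htx => hn (ht.symm.trans (congrArg length htx))

theorem ncard_Gam_inter_ofLength {n : ℕ} (hn : 1 ≤ n) :
    (Gam ∩ ofLength (n + 1)).ncard + (ofLength n).ncard = (ofLength (n + 1)).ncard := by
  rw [← ncard_xM_inter_ofLength, add_comm, ← ncard_union_inter_ofLength disjoint_xM_Gam,
    ← compl_x1_eq_xM_union_Gam, compl_x1_inter_ofLength (by omega)]

theorem ncard_xM_mul_univ_inter_ofLength {n : ℕ} (hn : 2 ≤ n) :
    (xM * univ ∩ ofLength (n + 1)).ncard = (ofLength n).ncard := by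
  have himage : xM * univ = mapFactors (x1 * ·) id '' (univ * univ) := by
    rw [image_mapFactors_mul, image_id, xM, singleton_mul]
  rw [himage, ncard_image_inter_ofLength (mapFactors_injective (mul_right_injective x1)
    injective_id) ?_ n, univ_mul_univ, compl_x1_inter_ofLength (by omega)]
  rintro _ ⟨u, -, v, -, rfl⟩
  simp only [mapFactors_mul, id_eq, length_mul, x1, length_of]
  omega

theorem ncard_Gam_mul_x1_inter_ofLength (n : ℕ) :
    (Gam * {x1} ∩ ofLength (n + 1)).ncard = (Gam ∩ ofLength n).ncard := by
  rw [mul_singleton, ncard_image_inter_ofLength (mul_left_injective x1) (fun _ _ => by simp [x1])]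

theorem ncard_Gam_mul_xM_inter_ofLength (n : ℕ) :
    (Gam * xM ∩ ofLength (n + 1)).ncard = (Gam * univ ∩ ofLength n).ncard := by
  have himage : Gam * xM = mapFactors id (x1 * ·) '' (Gam * univ) := by
    rw [image_mapFactors_mul, image_id, xM, singleton_mul]
  rw [himage, ncard_image_inter_ofLength (mapFactors_injective injective_id
    (mul_right_injective x1)) ?_ n]
  rintro _ ⟨u, -, v, -, rfl⟩
  simp only [mapFactors_mul, id_eq, length_mul, x1, length_of]
  omega

theorem ncard_Gam_mul_univ_inter_ofLength (n : ℕ) :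
    (Gam * univ ∩ ofLength n).ncard + (xM * univ ∩ ofLength n).ncard =
      (Gam ∩ ofLength n).ncard := by
  conv_rhs => rw [Gam_eq_union]
  rw [ncard_union_inter_ofLength (disjoint_mul_of_disjoint_left disjoint_xM_Gam _ _), add_comm]

theorem ncard_Om_inter_ofLength_eq_sum (n : ℕ) :
    (Om ∩ ofLength n).ncard = (xM * univ ∩ ofLength n).ncard +
      ((Gam * {x1} ∩ ofLength n).ncard + (Gam * xM ∩ ofLength n).ncard) := by
  have hx1xM := disjoint_mul_of_disjoint_right disjoint_x1_xM Gam Gam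
  rw [Om_eq, ncard_union_inter_ofLength (disjoint_union_right.mpr
      ⟨disjoint_mul_of_disjoint_left disjoint_xM_Gam _ _,
        disjoint_mul_of_disjoint_left disjoint_xM_Gam _ _⟩),
    ncard_union_inter_ofLength hx1xM]

theorem ncard_Om_inter_ofLength {n : ℕ} (hn : 2 ≤ n) :
    (Om ∩ ofLength (n + 2)).ncard + 3 * (ofLength n).ncard = 3 * (ofLength (n + 1)).ncard := by
  have hΩ := ncard_Om_inter_ofLength_eq_sum (n + 2)
  have hxMM : (xM * univ ∩ ofLength (n + 2)).ncard = (ofLength (n + 1)).ncard :=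
    ncard_xM_mul_univ_inter_ofLength (by omega)
  have hxMM' := ncard_xM_mul_univ_inter_ofLength hn
  have hΓx : (Gam * {x1} ∩ ofLength (n + 2)).ncard = (Gam ∩ ofLength (n + 1)).ncard :=
    ncard_Gam_mul_x1_inter_ofLength (n + 1)
  have hΓxM : (Gam * xM ∩ ofLength (n + 2)).ncard = (Gam * univ ∩ ofLength (n + 1)).ncard :=
    ncard_Gam_mul_xM_inter_ofLength (n + 1)
  have hΓM := ncard_Gam_mul_univ_inter_ofLength (n + 1)
  have hΓ := ncard_Gam_inter_ofLength (n := n) (by omega)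
  omega

theorem OmDeg_eq_empty {n : ℕ} (hn : n < 3) : OmDeg n = ∅ :=
  eq_empty_of_forall_notMem fun t ⟨ht, hlen⟩ => by
    have := three_le_length_of_mem_Gam ht.1
    omega

theorem OmDeg_three : OmDeg 3 = {(x1 * x1) * x1} := by
  ext t
  constructor
  · rintro ⟨⟨hΓ, -⟩, hlen⟩
    rw [Gam_eq] at hΓ
    obtain ⟨u, hu, v, -, rfl⟩ := hΓ
    rw [← univ_mul_univ] at hu
    obtain ⟨a, -, b, -, rfl⟩ := hu
    have := a.length_pos
    have := b.length_pos
    have := v.length_pos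
    simp only [length_mul] at hlen
    rw [length_eq_one_iff.mp (by omega : a.length = 1),
      length_eq_one_iff.mp (by omega : b.length = 1), length_eq_one_iff.mp (by omega : v.length = 1)]
    rfl
  · rintro rfl
    refine ⟨?_, rfl⟩
    rw [Om_eq]
    exact Or.inl ⟨x1 * x1, mem_xM.mpr ⟨x1, rfl⟩, x1, trivial, rfl⟩

theorem catalanC_succ (k : ℕ) : catalanC (k + 1) = catalan k := by
  rw [catalan_eq_centralBinom_div, Nat.centralBinom,
    Nat.choose_eq_factorial_div_factorial (by omega : k ≤ 2 * k), Nat.div_div_eq_div_mul]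
  unfold catalanC
  simp only [Nat.add_sub_cancel]
  congr 1
  rw [Nat.factorial_succ, show 2 * k - k = k by omega]
  ring

/-- `Ω_1 = Ω_2 = ∅`, `Ω_3 = {x²·x}`, and for `n ≥ 4`,
`|Ω_n| = 3(c_{n−1} − c_{n−2})`. -/
theorem card_Omega_deg :
    OmDeg 1 = ∅ ∧ OmDeg 2 = ∅ ∧ OmDeg 3 = {(x1 * x1) * x1} ∧
    ∀ n : ℕ, 4 ≤ n → (OmDeg n).ncard = 3 * (catalanC (n - 1) - catalanC (n - 2)) := by
  refine ⟨OmDeg_eq_empty (by norm_num), OmDeg_eq_empty (by norm_num), OmDeg_three, fun n hn => ?_⟩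
  obtain ⟨k, rfl⟩ : ∃ k, n = k + 4 := ⟨n - 4, by omega⟩
  have hcount := ncard_Om_inter_ofLength (n := k + 2) (by omega)
  rw [ncard_ofLength_succ, ncard_ofLength_succ] at hcount
  rw [show k + 4 - 1 = k + 2 + 1 by omega, show k + 4 - 2 = k + 1 + 1 by omega, catalanC_succ,
    catalanC_succ]
  change (Om ∩ ofLength (k + 2 + 2)).ncard = _
  omega

end Stmt9
end
end
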